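/- arXiv:1002.1782 — 5 statements merged into one kernel-verified Lean document; each statement's English description precedes it below -/
import Mathlib

section
/- Let p be a probability distribution on a finite set V. Suppose each element v independently activates with probability p_v, forming a set S, and then (if S ≠ ∅) one element is chosen uniformly at random from S. Then for every v, the probability that v is the chosen element is at least p_v / 2. -/
open Finset

private lemma marg {V : Type*} [Fintype V] [DecidableEq V] (p : V → ℝ) (A : Finset V) :
    ∑ S : Finset V, (if A ⊆ S then (∏ u ∈ S, p u) * (∏ u ∈ Sᶜ, (1 - p u)) else 0)
      = ∏ a ∈ A, p a := by
  have key : ∑ T ∈ Aᶜ.powerset, (∏ u ∈ T, p u) * (∏ u ∈ Aᶜ \ T, (1 - p u)) = 1 := by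
    rw [← Finset.prod_add]
    simp
  rw [Finset.sum_ite, Finset.sum_const_zero, add_zero]
  calc ∑ S ∈ Finset.univ.filter (fun S => A ⊆ S), (∏ u ∈ S, p u) * (∏ u ∈ Sᶜ, (1 - p u))
      = ∑ T ∈ Aᶜ.powerset, (∏ a ∈ A, p a) * ((∏ u ∈ T, p u) * (∏ u ∈ Aᶜ \ T, (1 - p u))) := by
        apply Finset.sum_nbij' (fun S => S \ A) (fun T => A ∪ T)
        · intro S hS
          simp only [Finset.mem_filter] at hS
          simp only [Finset.mem_powerset]
          intro x hx
          simp only [Finset.mem_sdiff] at hx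
          simp [hx.2]
        · intro T hT
          simp
        · intro S hS
          simp only [Finset.mem_filter] at hS
          exact Finset.union_sdiff_of_subset hS.2
        · intro T hT
          simp only [Finset.mem_powerset] at hT
          apply Finset.union_sdiff_cancel_left
          rw [Finset.disjoint_left]
          intro x hxA hxT
          have := hT hxT
          simp at this
          exact this hxA
        · intro S hS
          simp only [Finset.mem_filter] at hS
          have hsub : A ⊆ S := hS.2
          have h1 : (∏ u ∈ S, p u) = (∏ a ∈ A, p a) * ∏ u ∈ S \ A, p u := by
            rw [mul_comm, Finset.prod_sdiff hsub]
          have h2 : Sᶜ = Aᶜ \ (S \ A) := by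
            ext x
            simp only [Finset.mem_compl, Finset.mem_sdiff]
            constructor
            · intro hx; exact ⟨fun h => hx (hsub h), fun h => hx h.1⟩
            · intro hx hxS
              rcases hx with ⟨hxA, hx2⟩
              exact hx2 ⟨hxS, hxA⟩
          rw [h1, h2]; ring
    _ = ∏ a ∈ A, p a := by rw [← Finset.mul_sum, key, mul_one]

/-- Simple protocol: each `v` activates independently with probability `p v`, forming `S`;
if `S ≠ ∅` one element is chosen uniformly at random from `S`.  Then each `v` is chosen
with probability at least `p v / 2`. -/
theorem stmt2 {V : Type*} [Fintype V] [DecidableEq V] (p : V → ℝ)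
    (hp0 : ∀ v, 0 ≤ p v) (hp1 : ∀ v, p v ≤ 1) (hsum : ∑ v, p v = 1) (v : V) :
    p v / 2 ≤
      ∑ S : Finset V,
        ((∏ u ∈ S, p u) * (∏ u ∈ Sᶜ, (1 - p u))) *
          (if v ∈ S then 1 / (S.card : ℝ) else 0) := by
  set w : Finset V → ℝ := fun S => (∏ u ∈ S, p u) * (∏ u ∈ Sᶜ, (1 - p u)) with hw
  have hw0 : ∀ S, 0 ≤ w S := fun S =>
    mul_nonneg (Finset.prod_nonneg fun u _ => hp0 u)
      (Finset.prod_nonneg fun u _ => by linarith [hp1 u])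
  -- first moment
  have m1 : ∑ S : Finset V, (if v ∈ S then w S else 0) = p v := by
    have := marg p {v}
    simp only [Finset.singleton_subset_iff, Finset.prod_singleton] at this
    exact this
  -- second moment
  have m2 : ∑ S : Finset V, (if v ∈ S then w S * ((S.card : ℝ) - 1) else 0)
      = p v * (1 - p v) := by
    have hcard : ∀ S : Finset V, v ∈ S →
        ((S.card : ℝ) - 1) = ∑ u ∈ Finset.univ.erase v, (if u ∈ S then (1:ℝ) else 0) := by
      intro S hv
      rw [Finset.sum_ite_mem]
      rw [Finset.sum_const, nsmul_eq_mul, mul_one]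
      have : (Finset.univ.erase v) ∩ S = S.erase v := by
        ext x; simp [Finset.mem_erase, and_comm]
      rw [this, Finset.card_erase_of_mem hv]
      have h1 : 1 ≤ S.card := Finset.card_pos.mpr ⟨v, hv⟩
      push_cast [h1]
      ring
    have step : ∑ S : Finset V, (if v ∈ S then w S * ((S.card : ℝ) - 1) else 0)
        = ∑ u ∈ Finset.univ.erase v, ∑ S : Finset V, (if {v, u} ⊆ S then w S else 0) := by
      rw [Finset.sum_comm]
      apply Finset.sum_congr rfl
      intro S _
      by_cases hv : v ∈ S
      · simp only [hv, if_true]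
        rw [hcard S hv, Finset.mul_sum]
        apply Finset.sum_congr rfl
        intro u hu
        by_cases huS : u ∈ S <;> simp [Finset.insert_subset_iff, huS, hv]
      · simp only [hv, if_false]
        rw [Finset.sum_eq_zero]
        intro u hu
        rw [if_neg]
        intro h
        exact hv (h (by simp))
    rw [step]
    have : ∀ u ∈ Finset.univ.erase v,
        (∑ S : Finset V, (if {v, u} ⊆ S then w S else 0)) = p v * p u := by
      intro u hu
      have huv : u ≠ v := (Finset.mem_erase.mp hu).1
      have := marg p {v, u}
      rwa [Finset.prod_pair (fun h => huv h.symm)] at this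
    rw [Finset.sum_congr rfl this, ← Finset.mul_sum]
    congr 1
    have : ∑ u ∈ Finset.univ.erase v, p u = (∑ u, p u) - p v :=
      Finset.sum_erase_eq_sub (Finset.mem_univ v)
    rw [this, hsum]
  -- pointwise inequality
  have pw : ∀ S : Finset V,
      (if v ∈ S then w S - w S * ((S.card : ℝ) - 1) / 2 else 0)
        ≤ w S * (if v ∈ S then 1 / (S.card : ℝ) else 0) := by
    intro S
    by_cases hv : v ∈ S
    · simp only [hv, if_true]
      have h1 : 1 ≤ S.card := Finset.card_pos.mpr ⟨v, hv⟩
      have hk1 : (1:ℝ) ≤ (S.card : ℝ) := by exact_mod_cast h1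
      set k : ℝ := (S.card : ℝ) with hk
      have hfac : 0 ≤ (k - 1) * (k - 2) := by
        rcases Nat.lt_or_ge S.card 2 with h | h
        · have : S.card = 1 := le_antisymm (Nat.lt_succ_iff.mp h) h1
          rw [hk, this]; norm_num
        · have : (2:ℝ) ≤ k := by rw [hk]; exact_mod_cast h
          nlinarith
      have hkpos : 0 < k := by linarith
      have key : 1 - (k - 1) / 2 ≤ 1 / k := by
        rw [le_div_iff₀ hkpos]
        nlinarith
      calc w S - w S * (k - 1) / 2 = w S * (1 - (k - 1) / 2) := by ring
        _ ≤ w S * (1 / k) := by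
            apply mul_le_mul_of_nonneg_left key (hw0 S)
    · simp [hv]
  calc p v / 2 ≤ p v - p v * (1 - p v) / 2 := by nlinarith [hp0 v, hp1 v]
    _ = (∑ S : Finset V, (if v ∈ S then w S else 0))
          - (∑ S : Finset V, (if v ∈ S then w S * ((S.card : ℝ) - 1) else 0)) / 2 := by
        rw [m1, m2]
    _ = ∑ S : Finset V, (if v ∈ S then w S - w S * ((S.card : ℝ) - 1) / 2 else 0) := by
        rw [Finset.sum_div, ← Finset.sum_sub_distrib]
        apply Finset.sum_congr rfl
        intro S _
        by_cases hv : v ∈ S <;> simp [hv]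
    _ ≤ ∑ S : Finset V, w S * (if v ∈ S then 1 / (S.card : ℝ) else 0) :=
        Finset.sum_le_sum fun S _ => pw S
end

section
/- Let f : 2^V → ℝ be a monotone submodular set function with f(∅) = 0, and let A_0 = ∅, A_i = A_{i−1} ∪ {argmax_{s ∉ A_{i−1}} f(A_{i−1} ∪ {s})} be the greedy sets. Then for every k, f(A_k) ≥ (1 − 1/e)·max_{|A| ≤ k} f(A). -/
private lemma sub_sum_bound {V : Type*} [DecidableEq V] (f : Finset V → ℝ)
    (hsub : ∀ A B : Finset V, A ⊆ B → ∀ s ∉ B,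
      f (insert s B) - f B ≤ f (insert s A) - f A)
    (B : Finset V) : ∀ T : Finset V, f (B ∪ T) - f B ≤ ∑ s ∈ T, (f (insert s B) - f B) := by
  intro T
  induction T using Finset.induction_on with
  | empty => simp
  | @insert s T hs ih =>
    rw [Finset.sum_insert hs, Finset.union_insert]
    by_cases hsB : s ∈ B ∪ T
    · rw [Finset.insert_eq_self.2 hsB]
      rcases Finset.mem_union.1 hsB with h | h
      · rw [Finset.insert_eq_self.2 h]; linarith
      · exact absurd h hs
    · have := hsub B (B ∪ T) Finset.subset_union_left s hsB
      linarith

/-- Nemhauser–Wolsey–Fisher: for a monotone submodular `f` with `f ∅ = 0`, the greedy sets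
`A k` satisfy `f (A k) ≥ (1 - 1/e) * max_{|S| ≤ k} f S`. -/
theorem stmt6 {V : Type*} [Fintype V] [DecidableEq V] (f : Finset V → ℝ)
    (hmono : ∀ A B : Finset V, A ⊆ B → f A ≤ f B)
    (hsub : ∀ A B : Finset V, A ⊆ B → ∀ s ∉ B,
      f (insert s B) - f B ≤ f (insert s A) - f A)
    (hempty : f ∅ = 0)
    (k : ℕ) (A : ℕ → Finset V) (hA0 : A 0 = ∅)
    (hgreedy : ∀ i < k, ∃ s ∉ A i, A (i + 1) = insert s (A i) ∧
      ∀ t ∉ A i, f (insert t (A i)) ≤ f (insert s (A i))) :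
    ∀ S : Finset V, S.card ≤ k → (1 - Real.exp (-1)) * f S ≤ f (A k) := by
  intro S hScard
  have hfS : 0 ≤ f S := by rw [← hempty]; exact hmono _ _ (Finset.empty_subset S)
  rcases Nat.eq_zero_or_pos k with hk | hk
  · subst hk
    interval_cases hc : S.card
    · rw [Finset.card_eq_zero] at hc
      subst hc
      rw [hempty, hA0, hempty, mul_zero]
  · -- k ≥ 1
    have hkR : (1 : ℝ) ≤ (k : ℝ) := by exact_mod_cast hk
    have hkpos : (0 : ℝ) < k := by linarith
    have hq : (0:ℝ) ≤ 1 - 1/k := by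
      rw [sub_nonneg, div_le_one hkpos]; exact hkR
    -- main induction
    have main : ∀ i ≤ k, f S - f (A i) ≤ (1 - 1/k)^i * f S := by
      intro i
      induction i with
      | zero => intro _; rw [hA0, hempty]; simpa using hfS
      | succ i ih =>
        intro hik
        have hik' : i < k := hik
        have hi : f S - f (A i) ≤ (1 - 1/k)^i * f S := ih (le_of_lt hik')
        obtain ⟨s, hs, hAi1, hmax⟩ := hgreedy i hik'
        have hgain : 0 ≤ f (A (i+1)) - f (A i) := by
          rw [hAi1]; have := hmono (A i) (insert s (A i)) (Finset.subset_insert s _)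
          linarith
        have hsum : f S - f (A i) ≤ (k : ℝ) * (f (A (i+1)) - f (A i)) := by
          have h1 : f S ≤ f (A i ∪ S) := hmono _ _ Finset.subset_union_right
          have h2 := sub_sum_bound f hsub (A i) S
          have h3 : ∑ t ∈ S, (f (insert t (A i)) - f (A i)) ≤
              (S.card : ℝ) * (f (A (i+1)) - f (A i)) := by
            have := Finset.sum_le_card_nsmul S (fun t => f (insert t (A i)) - f (A i))
                (f (A (i+1)) - f (A i)) ?_
            · simpa [nsmul_eq_mul] using this
            · intro t ht
              show f (insert t (A i)) - f (A i) ≤ _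
              by_cases htA : t ∈ A i
              · rw [Finset.insert_eq_self.2 htA]; simpa using hgain
              · have := hmax t htA; rw [hAi1]; simp; linarith
          have h4 : (S.card : ℝ) * (f (A (i+1)) - f (A i)) ≤
              (k : ℝ) * (f (A (i+1)) - f (A i)) := by
            apply mul_le_mul_of_nonneg_right _ hgain
            exact_mod_cast hScard
          linarith
        have step : f S - f (A (i+1)) ≤ (1 - 1/k) * (f S - f (A i)) := by
          have : (1/(k:ℝ)) * (f S - f (A i)) ≤ f (A (i+1)) - f (A i) := by
            rw [div_mul_eq_mul_div, one_mul, div_le_iff₀ hkpos]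
            linarith [hsum]
          nlinarith
        calc f S - f (A (i+1)) ≤ (1 - 1/k) * (f S - f (A i)) := step
          _ ≤ (1 - 1/k) * ((1 - 1/k)^i * f S) := mul_le_mul_of_nonneg_left hi hq
          _ = (1 - 1/k)^(i+1) * f S := by ring
    have hfin := main k le_rfl
    have hexp : (1 - 1/(k:ℝ))^k ≤ Real.exp (-1) := by
      have h1 : (1 : ℝ) - 1/k ≤ Real.exp (-(1/k)) := by
        have := Real.add_one_le_exp (-(1/(k:ℝ)))
        linarith
      calc (1 - 1/(k:ℝ))^k ≤ (Real.exp (-(1/k)))^k :=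
            pow_le_pow_left₀ hq h1 k
        _ = Real.exp ((k:ℝ) * (-(1/k))) := by rw [← Real.exp_nat_mul]
        _ = Real.exp (-1) := by
            congr 1
            field_simp
    have : (1 - 1/(k:ℝ))^k * f S ≤ Real.exp (-1) * f S :=
      mul_le_mul_of_nonneg_right hexp hfS
    linarith
end

section
/- Let f : 2^V → ℝ be monotone submodular, S* a set of size at most k, and G any set. Then f(S*) − f(G) ≤ k · max_{v ∈ V} (f(G ∪ {v}) − f(G)). -/
/-- For monotone submodular `f`, any `S*` with `|S*| ≤ k` and any `G`:
`f(S*) - f(G) ≤ k · max_v (f(G ∪ {v}) - f(G))`. -/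
theorem stmt8 {V : Type*} [Fintype V] [DecidableEq V] [Nonempty V] (f : Finset V → ℝ)
    (hmono : ∀ A B : Finset V, A ⊆ B → f A ≤ f B)
    (hsub : ∀ A B : Finset V, A ⊆ B → ∀ s ∉ B,
      f (insert s B) - f B ≤ f (insert s A) - f A)
    (k : ℕ) (Sstar G : Finset V) (hcard : Sstar.card ≤ k) :
    f Sstar - f G ≤
      k * Finset.univ.sup' Finset.univ_nonempty (fun v => f (insert v G) - f G) := by
  set M := Finset.univ.sup' Finset.univ_nonempty (fun v => f (insert v G) - f G) with hM
  have hle : ∀ v : V, f (insert v G) - f G ≤ M := by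
    intro v; rw [hM]; exact Finset.le_sup' (fun v => f (insert v G) - f G) (Finset.mem_univ v)
  have hM0 : 0 ≤ M := by
    obtain ⟨v⟩ := ‹Nonempty V›
    have := hmono G (insert v G) (Finset.subset_insert v G)
    linarith [hle v]
  have key : ∀ S : Finset V, f (G ∪ S) - f G ≤ S.card * M := by
    intro S
    induction S using Finset.induction_on with
    | empty => simp
    | @insert a S ha ih =>
      rw [Finset.card_insert_of_notMem ha, Nat.cast_add, Nat.cast_one]
      have step : f (G ∪ insert a S) - f (G ∪ S) ≤ M := by
        have : G ∪ insert a S = insert a (G ∪ S) := by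
          ext x; simp [or_comm, or_left_comm]
        rw [this]
        by_cases h : a ∈ G ∪ S
        · rw [Finset.insert_eq_self.mpr h]; linarith
        · have := hsub G (G ∪ S) Finset.subset_union_left a h
          linarith [hle a]
      linarith
  have h1 : f Sstar ≤ f (G ∪ Sstar) := hmono _ _ Finset.subset_union_right
  have h2 := key Sstar
  have h3 : (Sstar.card : ℝ) * M ≤ k * M := by
    apply mul_le_mul_of_nonneg_right _ hM0
    exact_mod_cast hcard
  linarith
end

section
/- Let q(t) and p(t) be random variables with q(t) ≥ p(t) ≥ ε > 0, where conditioned on q(t) = q, E[q/p(t) | q(t) = q] ≤ min(αq/(αq − ε̂), q/ε) whenever αq > ε̂ (and ≤ q/ε always), for parameters α, ε̂ > 0. Then E[q(t)/p(t)] ≤ 1 + ε̂/(αε). -/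
open MeasureTheory

lemma stmt11_aux (ε εhat α x : ℝ) (hε : 0 < ε) (hεhat : 0 < εhat) (hα : 0 < α)
    (hx : ε ≤ x) :
    (if εhat < α * x then min (α * x / (α * x - εhat)) (x / ε)
        else x / ε) ≤ 1 + εhat / (α * ε) := by
  have hC : (εhat / α + ε) / ε = 1 + εhat / (α * ε) := by
    field_simp; ring
  rcases le_total x (εhat / α + ε) with h | h
  · have hx2 : x / ε ≤ 1 + εhat / (α * ε) := by
      rw [← hC]; gcongr
    split_ifs with hif
    · exact (min_le_right _ _).trans hx2
    · exact hx2
  · have key : εhat + α * ε ≤ α * x := by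
      have h2 := mul_le_mul_of_nonneg_left h hα.le
      rw [mul_add, mul_div_cancel₀ _ hα.ne'] at h2
      linarith
    have hαx : εhat < α * x := by nlinarith
    rw [if_pos hαx]
    have hden : α * ε ≤ α * x - εhat := by linarith
    have hpos : 0 < α * x - εhat := by linarith [mul_pos hα hε]
    have : α * x / (α * x - εhat) = 1 + εhat / (α * x - εhat) := by
      field_simp
      ring
    rw [this] at *
    have : εhat / (α * x - εhat) ≤ εhat / (α * ε) :=
      div_le_div_of_nonneg_left hεhat.le (mul_pos hα hε) hden
    exact (min_le_left _ _).trans (by linarith)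

/-- Lazy renormalization optimization step: if `q ≥ p ≥ ε > 0` and conditioned on `q(t)`,
`E[q/p | q(t)] ≤ min(αq/(αq - ε̂), q/ε)` whenever `αq > ε̂` (and `≤ q/ε` always), then
`E[q/p] ≤ 1 + ε̂/(αε)`. -/
theorem stmt11 {Ω : Type*} [MeasurableSpace Ω] (μ : Measure Ω) [IsProbabilityMeasure μ]
    (p q : Ω → ℝ) (hq : Measurable q)
    (ε εhat α : ℝ) (hε : 0 < ε) (hεhat : 0 < εhat) (hα : 0 < α)
    (hpq : ∀ ω, ε ≤ p ω ∧ p ω ≤ q ω)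
    (hint : Integrable (fun ω => q ω / p ω) μ)
    (hcond : ∀ᵐ ω ∂μ,
      (μ[(fun ω => q ω / p ω)|MeasurableSpace.comap q Real.measurableSpace]) ω ≤
        if εhat < α * q ω then min (α * q ω / (α * q ω - εhat)) (q ω / ε)
        else q ω / ε) :
    ∫ ω, q ω / p ω ∂μ ≤ 1 + εhat / (α * ε) := by
  have hm : MeasurableSpace.comap q Real.measurableSpace ≤ ‹MeasurableSpace Ω› :=
    hq.comap_le
  rw [← integral_condExp hm]
  have hbound : ∀ᵐ ω ∂μ,
      (μ[(fun ω => q ω / p ω)|MeasurableSpace.comap q Real.measurableSpace]) ω ≤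
        1 + εhat / (α * ε) := by
    filter_upwards [hcond] with ω hc
    refine hc.trans (stmt11_aux ε εhat α (q ω) hε hεhat hα ?_)
    exact (hpq ω).1.trans (hpq ω).2
  calc ∫ ω, (μ[(fun ω => q ω / p ω)|MeasurableSpace.comap q Real.measurableSpace]) ω ∂μ
      ≤ ∫ _, 1 + εhat / (α * ε) ∂μ :=
        integral_mono_ae integrable_condExp (integrable_const _) hbound
    _ = 1 + εhat / (α * ε) := by simp
end

section
/- Suppose a random variable p(t₀)/p(t) satisfies p(t')/p(t'+1) ≤ 1 + ε̂ for all rounds t', and an event (q(t) ≥ λ p(t) for λ ≥ 1) requires no activation in rounds t₀, …, t−1, each activation occurring independently with probability α q(t). Then P(q(t) ≥ λ p(t) | q(t)) ≤ (1 − α q(t))^{ln λ / ln(1+ε̂)}, and consequently, with L := ln(1/(1 − αq(t)))/ln(1+ε̂) > 1, E[q(t)/p(t) | q(t)] = 1 + ∫_1^∞ P(q(t) ≥ λ p(t)) dλ ≤ 1 + 1/(L − 1). -/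
open MeasureTheory

/-- Lazy renormalization tail bound: `q` is the stale estimate of the true probability `p`,
last synchronized `N` rounds ago, with `p` shrinking by a factor at most `1+ε̂` per round and
no activation occurring for `N` rounds, each independently with probability `αq`.  Then
`P(q ≥ λ p) ≤ (1-αq)^{ln λ / ln(1+ε̂)}` for `λ ≥ 1`, and consequently, with
`L = ln(1/(1-αq))/ln(1+ε̂) > 1`, `E[q/p] ≤ 1 + 1/(L-1)`. -/
theorem stmt12 {Ω : Type*} [MeasurableSpace Ω] (μ : Measure Ω) [IsProbabilityMeasure μ]
    (p : Ω → ℝ) (hp : Measurable p) (N : Ω → ℕ) (hN : Measurable N)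
    (q α εhat : ℝ) (hεhat : 0 < εhat) (hαq0 : 0 < α * q) (hαq1 : α * q < 1)
    (hpos : ∀ ω, 0 < p ω ∧ p ω ≤ q)
    (hsync : ∀ ω, q ≤ (1 + εhat) ^ (N ω) * p ω)
    (hact : ∀ n : ℕ, (μ {ω | n ≤ N ω}).toReal ≤ (1 - α * q) ^ n) :
    (∀ lam : ℝ, 1 ≤ lam →
      (μ {ω | lam * p ω ≤ q}).toReal
        ≤ (1 - α * q) ^ (Real.log lam / Real.log (1 + εhat))) ∧
    (1 < Real.log (1 / (1 - α * q)) / Real.log (1 + εhat) →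
      ∫ ω, q / p ω ∂μ
        ≤ 1 + 1 / (Real.log (1 / (1 - α * q)) / Real.log (1 + εhat) - 1)) := by
  have hc : 0 < Real.log (1 + εhat) := Real.log_pos (by linarith)
  have hb0 : 0 < 1 - α * q := by linarith
  have hb1 : 1 - α * q < 1 := by linarith
  have part1 : ∀ lam : ℝ, 1 ≤ lam →
      (μ {ω | lam * p ω ≤ q}).toReal
        ≤ (1 - α * q) ^ (Real.log lam / Real.log (1 + εhat)) := by
    intro lam hlam
    set x : ℝ := Real.log lam / Real.log (1 + εhat) with hxdef
    have hx0 : 0 ≤ x := div_nonneg (Real.log_nonneg hlam) hc.le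
    set n : ℕ := ⌈x⌉₊ with hndef
    have hsub : {ω | lam * p ω ≤ q} ⊆ {ω | n ≤ N ω} := by
      intro ω hω
      have hpω := (hpos ω).1
      have h1 : lam * p ω ≤ (1 + εhat) ^ (N ω) * p ω := le_trans hω (hsync ω)
      have h2 : lam ≤ (1 + εhat) ^ (N ω) :=
        le_of_mul_le_mul_right (by linarith [h1]) hpω
      have h3 : Real.log lam ≤ (N ω : ℝ) * Real.log (1 + εhat) := by
        calc Real.log lam ≤ Real.log ((1 + εhat) ^ (N ω)) :=
              Real.log_le_log (by linarith) h2
          _ = (N ω : ℝ) * Real.log (1 + εhat) := by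
              rw [Real.log_pow]
      have h4 : x ≤ (N ω : ℝ) := by
        rw [hxdef, div_le_iff₀ hc]; linarith
      exact Nat.ceil_le.mpr h4
    have hμ : (μ {ω | lam * p ω ≤ q}).toReal ≤ (μ {ω | n ≤ N ω}).toReal := by
      apply ENNReal.toReal_mono (measure_ne_top μ _) (measure_mono hsub)
    calc (μ {ω | lam * p ω ≤ q}).toReal ≤ (μ {ω | n ≤ N ω}).toReal := hμ
      _ ≤ (1 - α * q) ^ n := hact n
      _ = (1 - α * q) ^ (n : ℝ) := (Real.rpow_natCast _ n).symm
      _ ≤ (1 - α * q) ^ x :=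
          Real.rpow_le_rpow_of_exponent_ge hb0 hb1.le (Nat.le_ceil x)
  refine ⟨part1, ?_⟩
  intro hL
  set L : ℝ := Real.log (1 / (1 - α * q)) / Real.log (1 + εhat) with hLdef
  have hLlog : Real.log (1 / (1 - α * q)) = - Real.log (1 - α * q) := by
    rw [one_div, Real.log_inv]
  -- the key pointwise identity: (1-αq)^{log t / c} = t^{-L} for t > 0
  have key : ∀ t : ℝ, 0 < t →
      (1 - α * q) ^ (Real.log t / Real.log (1 + εhat)) = t ^ (-L) := by
    intro t ht
    rw [Real.rpow_def_of_pos hb0, Real.rpow_def_of_pos ht]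
    congr 1
    rw [hLdef, hLlog]
    field_simp
  set f : Ω → ℝ := fun ω => q / p ω with hfdef
  have hf1 : ∀ ω, 1 ≤ f ω := fun ω =>
    (one_le_div (hpos ω).1).mpr (hpos ω).2
  have hfm : Measurable f := measurable_const.div hp
  have hfnn : 0 ≤ᵐ[μ] f := Filter.Eventually.of_forall fun ω => le_trans zero_le_one (hf1 ω)
  -- layer cake
  have hlay : ∫⁻ ω, ENNReal.ofReal (f ω) ∂μ = ∫⁻ t in Set.Ioi 0, μ {a | t < f a} :=
    lintegral_eq_lintegral_meas_lt μ hfnn hfm.aemeasurable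
  -- tail bound for t > 1
  have htail : ∀ t : ℝ, 1 < t → μ {a | t < f a} ≤ ENNReal.ofReal (t ^ (-L)) := by
    intro t ht
    have hsub : {a | t < f a} ⊆ {ω | t * p ω ≤ q} := by
      intro ω hω
      have hpω := (hpos ω).1
      have : t < q / p ω := hω
      have := (lt_div_iff₀ hpω).mp this
      exact this.le
    have h1 : (μ {a | t < f a}).toReal ≤ t ^ (-L) := by
      calc (μ {a | t < f a}).toReal ≤ (μ {ω | t * p ω ≤ q}).toReal :=
            ENNReal.toReal_mono (measure_ne_top μ _) (measure_mono hsub)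
        _ ≤ (1 - α * q) ^ (Real.log t / Real.log (1 + εhat)) := part1 t ht.le
        _ = t ^ (-L) := key t (by linarith)
    calc μ {a | t < f a} = ENNReal.ofReal ((μ {a | t < f a}).toReal) :=
          (ENNReal.ofReal_toReal (measure_ne_top μ _)).symm
      _ ≤ ENNReal.ofReal (t ^ (-L)) := ENNReal.ofReal_le_ofReal h1
  have hLne : L - 1 > 0 := by linarith
  have hint : IntegrableOn (fun t : ℝ => t ^ (-L)) (Set.Ioi 1) :=
    integrableOn_Ioi_rpow_of_lt (by linarith) one_pos
  have hintval : ∫ t in Set.Ioi (1:ℝ), t ^ (-L) = 1 / (L - 1) := by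
    rw [integral_Ioi_rpow_of_lt (by linarith) one_pos]
    rw [Real.one_rpow]
    rw [div_eq_div_iff (by linarith) (by linarith)]
    ring
  have hIoi1 : ∫⁻ t in Set.Ioi (1:ℝ), μ {a | t < f a} ≤ ENNReal.ofReal (1 / (L - 1)) := by
    calc ∫⁻ t in Set.Ioi (1:ℝ), μ {a | t < f a}
        ≤ ∫⁻ t in Set.Ioi (1:ℝ), ENNReal.ofReal (t ^ (-L)) := by
          apply setLIntegral_mono' measurableSet_Ioi
          intro t ht
          exact htail t ht
      _ = ENNReal.ofReal (∫ t in Set.Ioi (1:ℝ), t ^ (-L)) := by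
          rw [← ofReal_integral_eq_lintegral_ofReal hint]
          exact (ae_restrict_iff' measurableSet_Ioi).mpr
            (Filter.Eventually.of_forall fun t ht =>
              Real.rpow_nonneg (by linarith [Set.mem_Ioi.mp ht]) _)
      _ = ENNReal.ofReal (1 / (L - 1)) := by rw [hintval]
  have hsplit : ∫⁻ t in Set.Ioi (0:ℝ), μ {a | t < f a}
      ≤ 1 + ENNReal.ofReal (1 / (L - 1)) := by
    have hunion : Set.Ioc (0:ℝ) 1 ∪ Set.Ioi 1 = Set.Ioi 0 :=
      Set.Ioc_union_Ioi_eq_Ioi zero_le_one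
    rw [← hunion, lintegral_union measurableSet_Ioi Set.Ioc_disjoint_Ioi_same]
    refine add_le_add ?_ hIoi1
    calc ∫⁻ t in Set.Ioc (0:ℝ) 1, μ {a | t < f a}
        ≤ ∫⁻ _ in Set.Ioc (0:ℝ) 1, 1 := lintegral_mono fun t => prob_le_one
      _ = 1 := by
          rw [setLIntegral_const, Real.volume_Ioc]
          simp
  have hfin : ∫⁻ ω, ENNReal.ofReal (f ω) ∂μ ≤ ENNReal.ofReal (1 + 1 / (L - 1)) := by
    rw [hlay]
    refine le_trans hsplit ?_
    rw [ENNReal.ofReal_add zero_le_one (by positivity), ENNReal.ofReal_one]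
  have hintf : Integrable f μ := by
    refine ⟨hfm.aestronglyMeasurable, ?_⟩
    rw [hasFiniteIntegral_iff_ofReal hfnn]
    exact lt_of_le_of_lt hfin ENNReal.ofReal_lt_top
  have hval : ∫ ω, q / p ω ∂μ = (∫⁻ ω, ENNReal.ofReal (f ω) ∂μ).toReal :=
    integral_eq_lintegral_of_nonneg_ae hfnn hfm.aestronglyMeasurable
  rw [hval]
  calc (∫⁻ ω, ENNReal.ofReal (f ω) ∂μ).toReal
      ≤ (ENNReal.ofReal (1 + 1 / (L - 1))).toReal :=
        ENNReal.toReal_mono ENNReal.ofReal_ne_top hfin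
    _ = 1 + 1 / (L - 1) := ENNReal.toReal_ofReal (by positivity)
end
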